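/- Let G be a connected locally finite simplicial graph with vertex set V, and let g : V → ℝ. If for every finite subset F ⊆ V there exists f : V → ℝ such that Δ_G(f) agrees with g on F, then there exists f : V → ℝ with Δ_G(f) = g. -/

import Mathlib

/-!
A connected locally finite graph has countably many vertices, and for a finite set `F` the
functions `f` with `Δf = g` on `F` form a nonempty affine subspace `A_F`. Fix the values of `f`
one vertex `v` at a time: the sets of values `f v` over `f ∈ A_F ∩ P` (with `P` the functions
agreeing with the values fixed so far) form a downward-directed family of nonempty affine
subspaces of `ℝ`, so it has a least member, and any value in it can be fixed without losing
solvability on finite sets. As `Δf(v)` only reads `f` on `v` and its neighbours, the function so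
obtained solves `Δf = g` everywhere.
-/

open SimpleGraph

noncomputable def lap {V : Type*} (G : SimpleGraph V) [G.LocallyFinite] (f : V → ℝ) (v : V) : ℝ :=
  f v - (1 / (G.degree v : ℝ)) * ∑ w ∈ G.neighborFinset v, f w

namespace SimpleGraph

variable {V : Type*} (G : SimpleGraph V) [G.LocallyFinite]

theorem finite_setOf_walk_length_le (r : V) (n : ℕ) :
    {v | ∃ p : G.Walk v r, p.length ≤ n}.Finite := by
  induction n with
  | zero =>
    refine (Set.finite_singleton r).subset ?_
    rintro v ⟨p, hp⟩
    cases p with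
    | nil => rfl
    | cons _ _ => simp at hp
  | succ n ih =>
    refine (ih.union (ih.biUnion fun u _ => (G.neighborSet u).toFinite)).subset ?_
    rintro v ⟨p, hp⟩
    cases p with
    | nil => exact Or.inl ⟨.nil, Nat.zero_le n⟩
    | cons hadj p =>
      rw [Walk.length_cons] at hp
      exact Or.inr (Set.mem_biUnion ⟨p, by omega⟩ (G.mem_neighborSet _ _ |>.2 hadj.symm))

variable {G} in
theorem Connected.countable (hG : G.Connected) : Countable V := by
  obtain ⟨r⟩ := hG.nonempty
  have hcover : ⋃ n : ℕ, {v | ∃ p : G.Walk v r, p.length ≤ n} = Set.univ :=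
    Set.eq_univ_of_forall fun v =>
      let ⟨p⟩ := hG.preconnected v r
      Set.mem_iUnion.2 ⟨p.length, p, le_rfl⟩
  exact Set.countable_univ_iff.1 <|
    hcover ▸ Set.countable_iUnion fun n => (G.finite_setOf_walk_length_le r n).countable

end SimpleGraph

namespace AffineSubspace

variable {k E F ι : Type*} [Field k] [AddCommGroup E] [Module k E] [AddCommGroup F] [Module k F]

/-- A member of least dimension is least: any smaller member has the same direction. -/
theorem exists_forall_le_of_directed [FiniteDimensional k E] [Nonempty ι]
    (S : ι → AffineSubspace k E) (hne : ∀ i, (S i : Set E).Nonempty)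
    (hdir : Directed (· ≥ ·) S) : ∃ i, ∀ j, S i ≤ S j := by
  let d i := Module.finrank k (S i).direction
  refine ⟨Function.argmin d, fun j => ?_⟩
  obtain ⟨l, hli, hlj⟩ := hdir (Function.argmin d) j
  obtain ⟨x, hx⟩ := hne l
  have hdirection : (S l).direction = (S (Function.argmin d)).direction :=
    Submodule.eq_of_le_of_finrank_le (direction_le hli) (not_lt.1 (Function.not_lt_argmin d l))
  have hl : S l = S (Function.argmin d) := (eq_iff_direction_eq_of_mem hx (hli hx)).2 hdirection
  exact hl ▸ hlj

theorem exists_forall_mem_map_of_directed [FiniteDimensional k F] [Nonempty ι]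
    (S : ι → AffineSubspace k E) (hne : ∀ i, (S i : Set E).Nonempty)
    (hdir : Directed (· ≥ ·) S) (φ : E →ᵃ[k] F) : ∃ y, ∀ i, y ∈ (S i).map φ := by
  obtain ⟨i, hi⟩ := exists_forall_le_of_directed (fun i => (S i).map φ)
    (fun i => by rw [coe_map]; exact (hne i).image φ)
    (hdir.mono_comp (· ≥ ·) (g := map φ) fun _ _ h => map_mono φ h)
  obtain ⟨y, hy⟩ := (hne i).image φ
  exact ⟨y, fun j => hi j (by rwa [← coe_map] at hy)⟩

end AffineSubspace

section FinitelySatisfiable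

variable {k V ι : Type*} [Field k] (C : ι → AffineSubspace k (V → k))

def pin (v : V) (x : k) : AffineSubspace k (V → k) :=
  (affineSpan k {x}).comap (LinearMap.proj v : (V → k) →ₗ[k] k).toAffineMap

@[simp]
theorem mem_pin {v : V} {x : k} {f : V → k} : f ∈ pin v x ↔ f v = x := by
  simp [pin]

def FinitelySatisfiableWithin (P : AffineSubspace k (V → k)) : Prop :=
  ∀ F : Finset ι, ∃ f ∈ P, ∀ i ∈ F, f ∈ C i

variable {C}

theorem FinitelySatisfiableWithin.exists_inf_pin {P : AffineSubspace k (V → k)}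
    (hP : FinitelySatisfiableWithin C P) (v : V) :
    ∃ x, FinitelySatisfiableWithin C (P ⊓ pin v x) := by
  let S : Finset ι → AffineSubspace k (V → k) := fun F => P ⊓ ⨅ i ∈ F, C i
  have hmem {F f} : f ∈ S F ↔ f ∈ P ∧ ∀ i ∈ F, f ∈ C i := by
    simp only [S, AffineSubspace.mem_inf_iff, AffineSubspace.mem_iInf_iff]
  have hS : Antitone S := fun F F' hF => inf_le_inf_left P (biInf_mono fun i hi => hF hi)
  obtain ⟨x, hx⟩ := AffineSubspace.exists_forall_mem_map_of_directed S
    (fun F => let ⟨f, hfP, hfC⟩ := hP F; ⟨f, hmem.2 ⟨hfP, hfC⟩⟩) hS.directed_ge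
    (LinearMap.proj v : (V → k) →ₗ[k] k).toAffineMap
  refine ⟨x, fun F => ?_⟩
  obtain ⟨f, hf, rfl⟩ := AffineSubspace.mem_map.1 (hx F)
  obtain ⟨hfP, hfC⟩ := hmem.1 hf
  exact ⟨f, ⟨hfP, mem_pin.2 rfl⟩, hfC⟩

theorem FinitelySatisfiableWithin.exists_seq_pin (hC : FinitelySatisfiableWithin C ⊤)
    (e : ℕ → V) : ∃ (P : ℕ → AffineSubspace k (V → k)) (x : ℕ → k),
      (∀ n, FinitelySatisfiableWithin C (P n)) ∧ ∀ m n, m < n → ∀ f ∈ P n, f (e m) = x m := by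
  choose! pinValue hpinValue using
    fun (P : AffineSubspace k (V → k)) (hP : FinitelySatisfiableWithin C P) => hP.exists_inf_pin
  let P : ℕ → AffineSubspace k (V → k) :=
    fun n => Nat.rec ⊤ (fun n Q => Q ⊓ pin (e n) (pinValue Q (e n))) n
  have hP : ∀ n, FinitelySatisfiableWithin C (P n) := by
    intro n
    induction n with
    | zero => exact hC
    | succ n ih => exact hpinValue (P n) ih (e n)
  have hanti : Antitone P := antitone_nat_of_succ_le fun n => inf_le_left
  refine ⟨P, fun n => pinValue (P n) (e n), hP, fun m n hmn f hf => ?_⟩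
  exact mem_pin.1 (inf_le_right (a := P m) (hanti hmn hf))

theorem exists_forall_mem_of_finitelySatisfiable [Countable V]
    (hloc : ∀ i, ∃ s : Finset V, ∀ f f' : V → k, (∀ v ∈ s, f v = f' v) → f ∈ C i → f' ∈ C i)
    (hfin : ∀ F : Finset ι, ∃ f, ∀ i ∈ F, f ∈ C i) : ∃ f, ∀ i, f ∈ C i := by
  have hC : FinitelySatisfiableWithin C ⊤ := fun F =>
    let ⟨f, hf⟩ := hfin F; ⟨f, AffineSubspace.mem_top k _ f, hf⟩
  rcases isEmpty_or_nonempty V with hV | hV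
  · refine ⟨0, fun i => ?_⟩
    obtain ⟨f, -, hf⟩ := hC {i}
    exact Subsingleton.elim f 0 ▸ hf i (Finset.mem_singleton_self i)
  obtain ⟨e, he⟩ := exists_surjective_nat V
  choose idx hidx using he
  obtain ⟨P, x, hP, hPx⟩ := hC.exists_seq_pin e
  refine ⟨fun v => x (idx v), fun i => ?_⟩
  obtain ⟨s, hs⟩ := hloc i
  obtain ⟨f, hfP, hfC⟩ := hP (s.sup fun v => idx v + 1) {i}
  refine hs f _ (fun v hv => ?_) (hfC i (Finset.mem_singleton_self i))
  have hlt : idx v < s.sup fun v => idx v + 1 := Finset.le_sup (f := fun v => idx v + 1) hv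
  simpa only [hidx] using hPx _ _ hlt f hfP

end FinitelySatisfiable

section Laplacian

variable {V : Type*} (G : SimpleGraph V) [G.LocallyFinite]

noncomputable def lapLinearMap (v : V) : (V → ℝ) →ₗ[ℝ] ℝ where
  toFun f := lap G f v
  map_add' f f' := by
    simp only [lap, Pi.add_apply, Finset.sum_add_distrib]
    ring
  map_smul' c f := by
    simp only [lap, Pi.smul_apply, smul_eq_mul, ← Finset.mul_sum, RingHom.id_apply]
    ring

theorem lap_congr [DecidableEq V] {f f' : V → ℝ} {v : V}
    (hf : ∀ w ∈ insert v (G.neighborFinset v), f w = f' w) : lap G f v = lap G f' v := by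
  rw [lap, lap, hf v (Finset.mem_insert_self _ _),
    Finset.sum_congr rfl fun w hw => hf w (Finset.mem_insert_of_mem hw)]

end Laplacian

theorem stmt7 {V : Type*} (G : SimpleGraph V) [G.LocallyFinite] (hconn : G.Connected)
    (g : V → ℝ) (h : ∀ F : Finset V, ∃ f : V → ℝ, ∀ v ∈ F, lap G f v = g v) :
    ∃ f : V → ℝ, lap G f = g := by
  classical
  have := hconn.countable
  let C v := (affineSpan ℝ {g v}).comap (lapLinearMap G v).toAffineMap
  have hmemC {v f} : f ∈ C v ↔ lap G f v = g v := by
    simp [C, lapLinearMap]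
  have hloc (v : V) :
      ∃ s : Finset V, ∀ f f' : V → ℝ, (∀ w ∈ s, f w = f' w) → f ∈ C v → f' ∈ C v :=
    ⟨insert v (G.neighborFinset v), fun f f' hff' hf => by
      rw [hmemC, ← lap_congr G hff']
      exact hmemC.1 hf⟩
  obtain ⟨f, hf⟩ := exists_forall_mem_of_finitelySatisfiable hloc
    fun F => let ⟨f, hf⟩ := h F; ⟨f, fun v hv => hmemC.2 (hf v hv)⟩
  exact ⟨f, funext fun v => hmemC.1 (hf v)⟩
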